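/- If A is an n×n real matrix satisfying |a_{ij}| ≤ ε·|a_{ii}| for all i ≠ j, 1 ≤ i,j ≤ n, where ε ≥ 0, then |det(A)| ≥ (∏_{i=1}^n |a_{ii}|) · (1 − (n−1)ε)(1 + ε)^{n−1}. -/

import Mathlib

/-!
Eliminate the first column with the pivot `a₀₀`: then `det A = a₀₀ · det S`, where `S` is the
Schur complement of `a₀₀`. Each correction term `aᵢ₀ a₀ⱼ / a₀₀` is at most `ε² |aᵢᵢ|`, so the
diagonal of `S` keeps at least the factor `1 - ε²` of that of `A`, while its off-diagonal entries
are at most `ε (1 + ε) |aᵢᵢ|`; hence `S` satisfies the hypothesis with `ε / (1 - ε)` in place of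
`ε`. The bound `(1 - (n - 1) ε) (1 + ε)^(n - 1)` is exactly invariant under this step:
`(1 - ε²)^n` times its value at `(n - 1, ε / (1 - ε))` is its value at `(n, ε)`. Induction on `n`
finishes the proof.
-/

open Finset

section DetBoundFactor

variable {K : Type*} [Field K] [LinearOrder K] [IsStrictOrderedRing K]

def detBoundFactor (n : ℕ) (ε : K) : K := (1 - n * ε) * (1 + ε) ^ n

theorem detBoundFactor_nonpos {n : ℕ} {ε : K} (hε : 0 ≤ ε) (h : 1 ≤ n * ε) :
    detBoundFactor n ε ≤ 0 :=
  mul_nonpos_of_nonpos_of_nonneg (by linarith) (by positivity)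

theorem detBoundFactor_nonneg {n : ℕ} {ε : K} (hε : 0 ≤ ε) (h : n * ε ≤ 1) :
    0 ≤ detBoundFactor n ε :=
  mul_nonneg (by linarith) (by positivity)

theorem one_sub_sq_pow_mul_detBoundFactor_div {ε : K} (hε : ε ≠ 1) (n : ℕ) :
    (1 - ε ^ 2) ^ (n + 1) * detBoundFactor n (ε / (1 - ε)) = detBoundFactor (n + 1) ε := by
  have h : 1 - ε ≠ 0 := sub_ne_zero.2 hε.symm
  have h2 : 1 + ε / (1 - ε) = (1 - ε)⁻¹ := by field_simp; ring
  rw [detBoundFactor, detBoundFactor, h2, show 1 - ε ^ 2 = (1 - ε) * (1 + ε) by ring, mul_pow,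
    inv_pow]
  push_cast
  field_simp
  ring

end DetBoundFactor

namespace Matrix

variable {K : Type*} [Field K] {n : ℕ}

def schurComplementZero (A : Matrix (Fin (n + 1)) (Fin (n + 1)) K) : Matrix (Fin n) (Fin n) K :=
  of fun i j => A i.succ j.succ - A i.succ 0 / A 0 0 * A 0 j.succ

theorem det_eq_mul_det_schurComplementZero (A : Matrix (Fin (n + 1)) (Fin (n + 1)) K)
    (h : A 0 0 ≠ 0) : A.det = A 0 0 * A.schurComplementZero.det := by
  let c : Fin (n + 1) → K := Fin.cons 0 fun i => A i.succ 0 / A 0 0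
  let B : Matrix (Fin (n + 1)) (Fin (n + 1)) K := of fun i j => A i j - c i * A 0 j
  have hB : A.det = B.det :=
    det_eq_of_forall_row_eq_smul_add_const c 0 rfl fun i j => by simp [B, c]
  have hB_col : ∀ i : Fin n, B i.succ 0 = 0 := fun i => by simp [B, c, h]
  rw [hB, det_succ_column_zero, Fin.sum_univ_succ]
  have hB_row : B 0 = A 0 := by ext j; simp [B, c]
  simp only [hB_col, hB_row, mul_zero, zero_mul, sum_const_zero, add_zero, Fin.val_zero, pow_zero,
    one_mul, Fin.succAbove_zero]
  rfl

section Ordered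

variable [LinearOrder K] [IsStrictOrderedRing K]

def OffDiagBoundedBy {ι : Type*} (ε : K) (A : Matrix ι ι K) : Prop :=
  ∀ i j, i ≠ j → |A i j| ≤ ε * |A i i|

theorem OffDiagBoundedBy.row_eq_zero {ι : Type*} {ε : K} {A : Matrix ι ι K}
    (hA : OffDiagBoundedBy ε A) {i : ι} (hi : A i i = 0) : A i = 0 := by
  ext j
  rcases eq_or_ne i j with rfl | hij
  · exact hi
  · simpa [hi] using hA i j hij

variable {ε : K} {A : Matrix (Fin (n + 1)) (Fin (n + 1)) K}

theorem abs_div_mul_le_of_offDiagBoundedBy (hA : OffDiagBoundedBy ε A) (hε : 0 ≤ ε)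
    (i j : Fin n) : |A i.succ 0 / A 0 0 * A 0 j.succ| ≤ ε ^ 2 * |A i.succ i.succ| := by
  rcases eq_or_ne (A 0 0) 0 with h | h
  · rw [h, div_zero, zero_mul, abs_zero]
    positivity
  have hi := hA i.succ 0 (Fin.succ_ne_zero i)
  have hj := hA 0 j.succ (Fin.succ_ne_zero j).symm
  rw [abs_mul, abs_div, div_mul_eq_mul_div, div_le_iff₀ (abs_pos.2 h)]
  calc |A i.succ 0| * |A 0 j.succ| ≤ (ε * |A i.succ i.succ|) * (ε * |A 0 0|) := by gcongr
    _ = ε ^ 2 * |A i.succ i.succ| * |A 0 0| := by ring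

theorem le_abs_schurComplementZero_diag (hA : OffDiagBoundedBy ε A) (hε : 0 ≤ ε) (i : Fin n) :
    (1 - ε ^ 2) * |A i.succ i.succ| ≤ |A.schurComplementZero i i| := by
  have := abs_sub_abs_le_abs_sub (A i.succ i.succ) (A i.succ 0 / A 0 0 * A 0 i.succ)
  have := abs_div_mul_le_of_offDiagBoundedBy hA hε i i
  simp only [schurComplementZero, of_apply]
  linarith

theorem abs_schurComplementZero_le (hA : OffDiagBoundedBy ε A) (hε : 0 ≤ ε) {i j : Fin n}
    (hij : i ≠ j) : |A.schurComplementZero i j| ≤ ε * (1 + ε) * |A i.succ i.succ| := by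
  have := abs_sub (A i.succ j.succ) (A i.succ 0 / A 0 0 * A 0 j.succ)
  have := hA i.succ j.succ (Fin.succ_injective _ |>.ne hij)
  have := abs_div_mul_le_of_offDiagBoundedBy hA hε i j
  simp only [schurComplementZero, of_apply]
  linarith

theorem OffDiagBoundedBy.schurComplementZero (hA : OffDiagBoundedBy ε A) (hε : 0 ≤ ε)
    (hε₁ : ε < 1) : OffDiagBoundedBy (ε / (1 - ε)) A.schurComplementZero := by
  intro i j hij
  have hpos : 0 < 1 - ε := by linarith
  calc |A.schurComplementZero i j| ≤ ε * (1 + ε) * |A i.succ i.succ| :=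
        abs_schurComplementZero_le hA hε hij
    _ = ε / (1 - ε) * ((1 - ε ^ 2) * |A i.succ i.succ|) := by field_simp; ring
    _ ≤ ε / (1 - ε) * |A.schurComplementZero i i| := by
        gcongr; exact le_abs_schurComplementZero_diag hA hε i

theorem prod_abs_diag_mul_detBoundFactor_le_abs_det (hA : OffDiagBoundedBy ε A) (hε : 0 ≤ ε) :
    (∏ i, |A i i|) * detBoundFactor n ε ≤ |A.det| := by
  induction n generalizing ε with
  | zero => simp [detBoundFactor]
  | succ n ih =>
    rcases le_or_gt 1 ((n + 1 : ℕ) * ε) with hbig | hsmall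
    · exact (mul_nonpos_of_nonneg_of_nonpos (by positivity) (detBoundFactor_nonpos hε hbig)).trans
        (abs_nonneg _)
    push_cast at hsmall
    have hε₁ : ε < 1 := by nlinarith
    rcases eq_or_ne (A 0 0) 0 with h0 | h0
    · rw [Fin.prod_univ_succ, h0, det_eq_zero_of_row_eq_zero 0 (congrFun (hA.row_eq_zero h0))]
      simp
    have hε' : 0 ≤ ε / (1 - ε) := div_nonneg hε (by linarith)
    have hF : 0 ≤ detBoundFactor n (ε / (1 - ε)) := by
      refine detBoundFactor_nonneg hε' ?_
      rw [← mul_div_assoc, div_le_one (by linarith)]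
      linarith
    calc (∏ i, |A i i|) * detBoundFactor (n + 1) ε
        = |A 0 0| * ((∏ i : Fin (n + 1), (1 - ε ^ 2) * |A i.succ i.succ|) *
            detBoundFactor n (ε / (1 - ε))) := by
          rw [← one_sub_sq_pow_mul_detBoundFactor_div hε₁.ne, Fin.prod_univ_succ, prod_mul_distrib,
            prod_const, card_fin]
          ring
      _ ≤ |A 0 0| * ((∏ i, |A.schurComplementZero i i|) * detBoundFactor n (ε / (1 - ε))) := by
          gcongr with i
          · have : 0 ≤ 1 - ε ^ 2 := by nlinarith
            intros; positivity
          · exact le_abs_schurComplementZero_diag hA hε i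
      _ ≤ |A 0 0| * |A.schurComplementZero.det| := by
          gcongr
          exact ih (hA.schurComplementZero hε hε₁) hε'
      _ = |A.det| := by rw [det_eq_mul_det_schurComplementZero A h0, abs_mul]

end Ordered

end Matrix

/-- If `A` is an `n × n` real matrix with `|a i j| ≤ ε |a i i|` for all `i ≠ j`,
where `ε ≥ 0`, then `|det A| ≥ (∏ i, |a i i|) (1 - (n-1) ε) (1 + ε)^(n-1)`. -/
theorem abs_det_lower_bound_diag_dominant
    (n : ℕ) (hn : 1 ≤ n) (ε : ℝ) (hε : 0 ≤ ε)
    (A : Matrix (Fin n) (Fin n) ℝ)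
    (hA : ∀ i j, i ≠ j → |A i j| ≤ ε * |A i i|) :
    (∏ i, |A i i|) * ((1 - ((n : ℝ) - 1) * ε) * (1 + ε) ^ (n - 1)) ≤ |A.det| := by
  obtain ⟨m, rfl⟩ : ∃ m, n = m + 1 := ⟨n - 1, by omega⟩
  simpa [detBoundFactor] using Matrix.prod_abs_diag_mul_detBoundFactor_le_abs_det (ε := ε) hA hε
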